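/- Fix λ with 2λ > d + 2 and let ε > 0 and probability measures μ, ν on R^d with Fourier functionals F_k. For κ(x) = (1/ε) ∫ Re(F_k(μ-ν) f_k^*(x)) / (1+|k|^2)^λ dk, the signed-measure pairing satisfies ∫ ∇²κ(x) d(μ-ν)(x) = −(1/ε) ∫_{R^d} |F_k(μ-ν)|^2 k k^T / (1+|k|^2)^λ dk; in particular this matrix is negative semidefinite. -/

import Mathlib

/-!
With `φ_ρ` the characteristic function of `ρ`, the potential is `κ(x) = Re ∫ e^{-i⟨k,x⟩} q(k) dk`
for `q(k) = (2π)^{-d} (1+|k|²)^{-λ} (φ_μ - φ_ν)(k) / ε`. Since `2λ > d + 2`, `(1+|k|²) q` is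
integrable, so one may differentiate twice under the integral:
`∂ᵢ∂ⱼκ(x) = Re ∫ e^{-i⟨k,x⟩} (-kᵢkⱼ) q(k) dk`. Integrating in `x` against `μ - ν` and applying
Fubini turns `e^{-i⟨k,x⟩}` into `conj (φ_μ - φ_ν)(k)`, and the integrand becomes
`-kᵢkⱼ |F_k(μ-ν)|² / (ε (1+|k|²)^λ)`. Minus this matrix is `∫ w(k) k kᵀ dk` with `w ≥ 0`,
hence positive semidefinite.
-/

open MeasureTheory

noncomputable def charF (d : ℕ) (ρ : Measure (EuclideanSpace ℝ (Fin d)))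
    (k : EuclideanSpace ℝ (Fin d)) : ℂ :=
  ((2 * Real.pi) ^ (-(d : ℝ) / 2) : ℝ) *
    ∫ x, Complex.exp (Complex.I * ((inner ℝ k x : ℝ) : ℂ)) ∂ρ

noncomputable def fourierKer (d : ℕ) (k x : EuclideanSpace ℝ (Fin d)) : ℂ :=
  ((2 * Real.pi) ^ (-(d : ℝ) / 2) : ℝ) *
    Complex.exp (Complex.I * ((inner ℝ k x : ℝ) : ℂ))

noncomputable def kappaFn (d : ℕ) (lam ε : ℝ)
    (μ ν : Measure (EuclideanSpace ℝ (Fin d))) (x : EuclideanSpace ℝ (Fin d)) : ℝ :=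
  (1 / ε) * ∫ k : EuclideanSpace ℝ (Fin d),
    ((charF d μ k - charF d ν k) * (starRingEnd ℂ) (fourierKer d k x)).re /
      (1 + ‖k‖ ^ 2) ^ lam

/-- The `(i,j)` entry of the Hessian `∇²κ(x)`. -/
noncomputable def hessEntry (d : ℕ) (κ : EuclideanSpace ℝ (Fin d) → ℝ)
    (x : EuclideanSpace ℝ (Fin d)) (i j : Fin d) : ℝ :=
  fderiv ℝ (fun y => fderiv ℝ κ y (EuclideanSpace.single j 1)) x
    (EuclideanSpace.single i 1)

open Complex Real Module
open scoped RealInnerProductSpace ComplexConjugate FourierTransform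

lemma integrable_of_integrable_one_add_norm_sq_mul {V E : Type*} [NormedAddCommGroup V]
    [NormedAddCommGroup E] [MeasurableSpace V] {m : Measure V} {q : V → E}
    (hq : AEStronglyMeasurable q m) (h : Integrable (fun k => (1 + ‖k‖ ^ 2) * ‖q k‖) m) :
    Integrable q m :=
  h.mono' hq (ae_of_all _ fun k =>
    le_mul_of_one_le_left (norm_nonneg _) (by nlinarith [norm_nonneg k]))

lemma norm_charFun_sub_le_two {E : Type*} [SeminormedAddCommGroup E] [InnerProductSpace ℝ E]
    [MeasurableSpace E] (μ ν : Measure E) [IsProbabilityMeasure μ] [IsProbabilityMeasure ν]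
    (k : E) : ‖charFun μ k - charFun ν k‖ ≤ 2 :=
  (norm_sub_le _ _).trans (by
    linarith [norm_charFun_le_one (μ := μ) k, norm_charFun_le_one (μ := ν) k])

section AngularFourier

variable {V : Type*} [NormedAddCommGroup V] [InnerProductSpace ℝ V] [MeasurableSpace V]

noncomputable def angularFourier (m : Measure V) (q : V → ℂ) (x : V) : ℂ :=
  ∫ k, cexp (-(⟪k, x⟫ * I)) * q k ∂m

lemma angularFourier_eq_fourierIntegral (m : Measure V) (q : V → ℂ) :
    angularFourier m q = VectorFourier.fourierIntegral 𝐞 m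
      ((2 * π)⁻¹ • innerSL ℝ : V →L[ℝ] V →L[ℝ] ℝ).toLinearMap₁₂ q := by
  ext x
  simp only [angularFourier, VectorFourier.fourierIntegral]
  congr 1 with k
  rw [Circle.smul_def, Real.fourierChar_apply, smul_eq_mul]
  congr 2
  simp only [map_smul, LinearMap.smul_apply, ContinuousLinearMap.toLinearMap₁₂_apply_apply_apply,
    coe_innerSL_apply, smul_eq_mul]
  push_cast
  field_simp

variable [BorelSpace V] [SecondCountableTopology V] {m : Measure V} {q : V → ℂ}

lemma differentiable_angularFourier (hq : Integrable q m)
    (hq1 : Integrable (fun k => ‖k‖ * ‖q k‖) m) : Differentiable ℝ (angularFourier m q) := by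
  rw [angularFourier_eq_fourierIntegral]
  exact VectorFourier.differentiable_fourierIntegral _ hq hq1

lemma fderiv_angularFourier_apply (hq : Integrable q m)
    (hq1 : Integrable (fun k => ‖k‖ * ‖q k‖) m) (x v : V) :
    fderiv ℝ (angularFourier m q) x v = angularFourier m (fun k => -(⟪k, v⟫ * I) * q k) x := by
  set L : V →L[ℝ] V →L[ℝ] ℝ := (2 * π)⁻¹ • innerSL ℝ
  have hL : Integrable (VectorFourier.fourierSMulRight L q) m :=
    (hq1.const_mul (2 * π * ‖L‖)).mono' hq.1.fourierSMulRight (ae_of_all _ fun k => by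
      simpa [mul_assoc] using VectorFourier.norm_fourierSMulRight_le L q k)
  rw [angularFourier_eq_fourierIntegral, VectorFourier.fderiv_fourierIntegral _ hq hq1,
    Real.fourierIntegral_continuousLinearMap_apply' hL, angularFourier_eq_fourierIntegral]
  congr 1 with k
  change -(2 * π * I) • ((2 * π)⁻¹ • ⟪k, v⟫) • q k = _
  rw [smul_eq_mul, Complex.real_smul, smul_eq_mul]
  push_cast
  field_simp

lemma fderiv_re_angularFourier_apply (hq : Integrable q m)
    (hq1 : Integrable (fun k => ‖k‖ * ‖q k‖) m) (x v : V) :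
    fderiv ℝ (fun y => (angularFourier m q y).re) x v =
      (angularFourier m (fun k => -(⟪k, v⟫ * I) * q k) x).re := by
  have h : HasFDerivAt (fun y => (angularFourier m q y).re)
      (reCLM.comp (fderiv ℝ (angularFourier m q) x)) x :=
    reCLM.hasFDerivAt.comp x (differentiable_angularFourier hq hq1 x).hasFDerivAt
  rw [h.fderiv, ContinuousLinearMap.comp_apply, fderiv_angularFourier_apply hq hq1, reCLM_apply]

lemma fderiv_fderiv_re_angularFourier_apply (hq : AEStronglyMeasurable q m)
    (h : Integrable (fun k => (1 + ‖k‖ ^ 2) * ‖q k‖) m) (x u v : V) :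
    fderiv ℝ (fun y => fderiv ℝ (fun z => (angularFourier m q z).re) y v) x u =
      (angularFourier m (fun k => -((⟪k, u⟫ * ⟪k, v⟫ : ℝ) : ℂ) * q k) x).re := by
  have hk (k : V) : ‖k‖ ≤ 1 + ‖k‖ ^ 2 := by nlinarith [sq_nonneg (‖k‖ - 1)]
  have hinner (k : V) : ‖-(⟪k, v⟫ * I)‖ ≤ ‖v‖ * ‖k‖ := by
    simpa [mul_comm] using abs_real_inner_le_norm k v
  set qv := fun k => -(⟪k, v⟫ * I) * q k
  have hqv : AEStronglyMeasurable qv m := by fun_prop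
  have hint : Integrable q m := integrable_of_integrable_one_add_norm_sq_mul hq h
  have hint1 : Integrable (fun k => ‖k‖ * ‖q k‖) m := h.mono' (by fun_prop) (ae_of_all _ fun k => by
    simp only [norm_mul, norm_norm]; gcongr; exact hk k)
  have hvint : Integrable qv m := (h.const_mul ‖v‖).mono' hqv (ae_of_all _ fun k => by
    simp only [qv, norm_mul]
    calc ‖-(⟪k, v⟫ * I)‖ * ‖q k‖ ≤ ‖v‖ * ‖k‖ * ‖q k‖ := by gcongr; exact hinner k
      _ ≤ ‖v‖ * ((1 + ‖k‖ ^ 2) * ‖q k‖) := by rw [mul_assoc]; gcongr; exact hk k)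
  have hvint1 : Integrable (fun k => ‖k‖ * ‖qv k‖) m :=
    (h.const_mul ‖v‖).mono' (by fun_prop) (ae_of_all _ fun k => by
      simp only [qv, norm_mul, norm_norm]
      calc ‖k‖ * (‖-(⟪k, v⟫ * I)‖ * ‖q k‖) ≤ ‖k‖ * (‖v‖ * ‖k‖ * ‖q k‖) := by
            gcongr; exact hinner k
        _ ≤ ‖v‖ * ((1 + ‖k‖ ^ 2) * ‖q k‖) := by nlinarith [norm_nonneg v, norm_nonneg (q k)])
  simp_rw [fderiv_re_angularFourier_apply hint hint1]
  rw [fderiv_re_angularFourier_apply hvint hvint1]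
  congr 2 with k
  push_cast
  linear_combination (⟪k, u⟫ * ⟪k, v⟫ * q k : ℂ) * I_sq

lemma re_angularFourier (hq : Integrable q m) (x : V) :
    (angularFourier m q x).re = ∫ k, (cexp (-(⟪k, x⟫ * I)) * q k).re ∂m :=
  (integral_re (hq.bdd_mul (c := 1) (by fun_prop) (ae_of_all _ fun k => by simp [norm_exp]))).symm

variable [SFinite m]

lemma integrable_uncurry_angularFourier (ρ : Measure V) [IsFiniteMeasure ρ]
    (hq : Integrable q m) :
    Integrable (Function.uncurry fun x k => cexp (-(⟪k, x⟫ * I)) * q k) (ρ.prod m) :=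
  (hq.comp_snd ρ).mono
    ((Continuous.aestronglyMeasurable (by fun_prop)).mul hq.1.comp_snd) (ae_of_all _ fun p => by
    simp [Function.uncurry, norm_exp])

lemma integral_angularFourier (ρ : Measure V) [IsFiniteMeasure ρ] (hq : Integrable q m) :
    ∫ x, angularFourier m q x ∂ρ = ∫ k, conj (charFun ρ k) * q k ∂m := by
  simp only [angularFourier]
  rw [integral_integral_swap (integrable_uncurry_angularFourier ρ hq)]
  congr 1 with k
  rw [integral_mul_const, charFun_apply, ← integral_conj]
  congr 2 with x
  rw [← exp_conj]
  simp [real_inner_comm]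

lemma integral_re_angularFourier_sub (μ ν : Measure V) [IsFiniteMeasure μ] [IsFiniteMeasure ν]
    (hq : Integrable q m) :
    ∫ x, (angularFourier m q x).re ∂μ - ∫ x, (angularFourier m q x).re ∂ν =
      ∫ k, (conj (charFun μ k - charFun ν k) * q k).re ∂m := by
  have hF (ρ : Measure V) [IsFiniteMeasure ρ] : Integrable (angularFourier m q) ρ :=
    (integrable_uncurry_angularFourier ρ hq).integral_prod_left
  have hφ (ρ : Measure V) [IsFiniteMeasure ρ] :
      Integrable (fun k => conj (charFun ρ k) * q k) m :=
    hq.bdd_mul (by fun_prop) (ae_of_all _ fun k => by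
      simpa using norm_charFun_le (μ := ρ) k)
  have hre {ρ : Measure V} {f : V → ℂ} (hf : Integrable f ρ) :
      ∫ x, (f x).re ∂ρ = (∫ x, f x ∂ρ).re := integral_re hf
  have hφsub : Integrable (fun k => conj (charFun μ k - charFun ν k) * q k) m := by
    simp_rw [map_sub, sub_mul]
    exact (hφ μ).sub (hφ ν)
  rw [hre (hF μ), hre (hF ν), hre hφsub, ← sub_re,
    integral_angularFourier μ hq, integral_angularFourier ν hq, ← integral_sub (hφ μ) (hφ ν)]
  simp [sub_mul]

end AngularFourier

lemma Matrix.posSemidef_of_integral_mul_mul {α ι : Type*} [MeasurableSpace α] [Fintype ι]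
    {m : Measure α} {g : α → ℝ} (hg : ∀ a, 0 ≤ g a) {f : α → ι → ℝ}
    (hint : ∀ i j, Integrable (fun a => g a * (f a i * f a j)) m) :
    (Matrix.of fun i j => ∫ a, g a * (f a i * f a j) ∂m).PosSemidef := by
  set M := Matrix.of fun i j => ∫ a, g a * (f a i * f a j) ∂m
  refine Matrix.PosSemidef.of_dotProduct_mulVec_nonneg ?_ fun v => ?_
  · ext i j
    simp [M, mul_comm (f _ i)]
  have hsq (a : α) :
      g a * (∑ i, v i * f a i) ^ 2 = ∑ i, ∑ j, v i * (g a * (f a i * f a j) * v j) := by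
    rw [sq, Finset.sum_mul_sum, Finset.mul_sum]
    refine Finset.sum_congr rfl fun i _ => ?_
    rw [Finset.mul_sum]
    exact Finset.sum_congr rfl fun j _ => by ring
  have hij (i j : ι) : Integrable (fun a => v i * (g a * (f a i * f a j) * v j)) m :=
    ((hint i j).mul_const _).const_mul _
  have hquad : dotProduct (star v) (M.mulVec v) = ∫ a, g a * (∑ i, v i * f a i) ^ 2 ∂m := by
    simp only [M, dotProduct, Matrix.mulVec, Matrix.of_apply, star_trivial, Finset.mul_sum,
      ← integral_const_mul, ← integral_mul_const, hsq]
    rw [integral_finsetSum _ fun i _ => integrable_finsetSum _ fun j _ => hij i j]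
    exact Finset.sum_congr rfl fun i _ => (integral_finsetSum _ fun j _ => hij i j).symm
  exact hquad ▸ integral_nonneg fun a => mul_nonneg (hg a) (sq_nonneg _)

lemma integrable_one_add_norm_sq_mul_rpow_neg {V : Type*} [NormedAddCommGroup V]
    [InnerProductSpace ℝ V] [FiniteDimensional ℝ V] [MeasurableSpace V] [BorelSpace V]
    (m : Measure V) [m.IsAddHaarMeasure] {lam : ℝ} (hlam : finrank ℝ V + 2 < 2 * lam) :
    Integrable (fun k : V => (1 + ‖k‖ ^ 2) * (1 + ‖k‖ ^ 2) ^ (-lam)) m := by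
  refine (integrable_rpow_neg_one_add_norm_sq (μ := m) (r := 2 * lam - 2) (by linarith)).congr
    (ae_of_all _ fun k => ?_)
  beta_reduce
  rw [show -(2 * lam - 2) / 2 = 1 + -lam by ring, Real.rpow_add (by positivity), Real.rpow_one]

section Kappa

variable {d : ℕ} (lam ε : ℝ) (μ ν : Measure (EuclideanSpace ℝ (Fin d)))

lemma charF_eq_mul_charFun (ρ : Measure (EuclideanSpace ℝ (Fin d)))
    (k : EuclideanSpace ℝ (Fin d)) :
    charF d ρ k = ((2 * π) ^ (-(d : ℝ) / 2) : ℝ) * charFun ρ k := by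
  simp only [charF, charFun_apply, real_inner_comm, mul_comm I]

/-- The square of `(2π)^(-d/2)` collects the normalisations of `charF` and `fourierKer`. -/
noncomputable def kappaSpectrum (k : EuclideanSpace ℝ (Fin d)) : ℂ :=
  (((1 + ‖k‖ ^ 2) ^ (-lam) * ((2 * π) ^ (-(d : ℝ) / 2)) ^ 2 / ε : ℝ) : ℂ) *
    (charFun μ k - charFun ν k)

variable [IsProbabilityMeasure μ] [IsProbabilityMeasure ν]

lemma aestronglyMeasurable_kappaSpectrum :
    AEStronglyMeasurable (kappaSpectrum lam ε μ ν) := by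
  unfold kappaSpectrum
  fun_prop

lemma integrable_one_add_norm_sq_mul_norm_kappaSpectrum (hlam : 2 * lam > d + 2) :
    Integrable fun k => (1 + ‖k‖ ^ 2) * ‖kappaSpectrum lam ε μ ν k‖ := by
  set C := ((2 * π) ^ (-(d : ℝ) / 2)) ^ 2 / |ε|
  have hw := integrable_one_add_norm_sq_mul_rpow_neg volume (lam := lam)
    (V := EuclideanSpace ℝ (Fin d)) (by simpa using hlam)
  refine (hw.const_mul (2 * C)).mono'
    (by have := aestronglyMeasurable_kappaSpectrum lam ε μ ν; fun_prop) (ae_of_all _ fun k => ?_)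
  have hφ := norm_charFun_sub_le_two μ ν k
  have hκ : ‖kappaSpectrum lam ε μ ν k‖ ≤ 2 * C * (1 + ‖k‖ ^ 2) ^ (-lam) := by
    rw [kappaSpectrum, norm_mul, Complex.norm_real, Real.norm_eq_abs, abs_div, abs_mul,
      abs_of_nonneg (by positivity), abs_of_nonneg (by positivity)]
    calc _ ≤ (1 + ‖k‖ ^ 2) ^ (-lam) * ((2 * π) ^ (-(d : ℝ) / 2)) ^ 2 / |ε| * 2 := by gcongr
      _ = _ := by ring
  rw [Real.norm_of_nonneg (by positivity)]
  calc _ ≤ (1 + ‖k‖ ^ 2) * (2 * C * (1 + ‖k‖ ^ 2) ^ (-lam)) := by gcongr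
    _ = _ := by ring

lemma kappaFn_eq (hlam : 2 * lam > d + 2) :
    kappaFn d lam ε μ ν = fun x => (angularFourier volume (kappaSpectrum lam ε μ ν) x).re := by
  ext x
  rw [re_angularFourier (integrable_of_integrable_one_add_norm_sq_mul
    (aestronglyMeasurable_kappaSpectrum lam ε μ ν)
    (integrable_one_add_norm_sq_mul_norm_kappaSpectrum lam ε μ ν hlam)), kappaFn,
    ← integral_const_mul]
  congr 1 with k
  have hconj : (charF d μ k - charF d ν k) * conj (fourierKer d k x) =
      (((2 * π) ^ (-(d : ℝ) / 2) * (2 * π) ^ (-(d : ℝ) / 2) : ℝ) : ℂ) *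
        (cexp (-(⟪k, x⟫ * I)) * (charFun μ k - charFun ν k)) := by
    simp only [fourierKer, charF_eq_mul_charFun, map_mul, conj_ofReal, ← exp_conj, conj_I]
    push_cast
    ring_nf
  rw [hconj, kappaSpectrum, mul_left_comm (cexp _), re_ofReal_mul, re_ofReal_mul,
    Real.rpow_neg (by positivity)]
  field_simp

lemma hessEntry_kappaFn (hlam : 2 * lam > d + 2) (x : EuclideanSpace ℝ (Fin d)) (i j : Fin d) :
    hessEntry d (kappaFn d lam ε μ ν) x i j =
      (angularFourier volume
        (fun k => -((k i * k j : ℝ) : ℂ) * kappaSpectrum lam ε μ ν k) x).re := by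
  rw [hessEntry, kappaFn_eq lam ε μ ν hlam, fderiv_fderiv_re_angularFourier_apply
    (aestronglyMeasurable_kappaSpectrum lam ε μ ν)
    (integrable_one_add_norm_sq_mul_norm_kappaSpectrum lam ε μ ν hlam)]
  simp [EuclideanSpace.inner_single_right]

lemma integral_hessEntry_kappaFn_sub (hlam : 2 * lam > d + 2) (i j : Fin d) :
    (∫ x, hessEntry d (kappaFn d lam ε μ ν) x i j ∂μ) -
        ∫ x, hessEntry d (kappaFn d lam ε μ ν) x i j ∂ν =
      -(1 / ε) * ∫ k : EuclideanSpace ℝ (Fin d),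
        ‖charF d μ k - charF d ν k‖ ^ 2 * (k i * k j) / (1 + ‖k‖ ^ 2) ^ lam := by
  have hint : Integrable fun k => -((k i * k j : ℝ) : ℂ) * kappaSpectrum lam ε μ ν k :=
    (integrable_one_add_norm_sq_mul_norm_kappaSpectrum lam ε μ ν hlam).mono'
      (by have := aestronglyMeasurable_kappaSpectrum lam ε μ ν; fun_prop)
      (ae_of_all _ fun k => by
        rw [norm_mul, norm_neg, Complex.norm_real, norm_mul]
        gcongr
        nlinarith [PiLp.norm_apply_le k i, PiLp.norm_apply_le k j, norm_nonneg (k i),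
          norm_nonneg (k j)])
  simp_rw [hessEntry_kappaFn lam ε μ ν hlam]
  rw [integral_re_angularFourier_sub μ ν hint, ← integral_const_mul]
  congr 1 with k
  have hre (a b : ℝ) (z : ℂ) :
      conj z * (-(a : ℂ) * (b * z)) = ((-(a * b) * ‖z‖ ^ 2 : ℝ) : ℂ) := by
    push_cast
    linear_combination (-(a * b : ℂ)) * conj_mul' z
  rw [kappaSpectrum, hre, ofReal_re, charF_eq_mul_charFun, charF_eq_mul_charFun, ← mul_sub,
    norm_mul, Complex.norm_real, Real.norm_of_nonneg (by positivity), Real.rpow_neg (by positivity)]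
  field_simp

lemma integrable_norm_charF_sub_sq_div_mul (hlam : 2 * lam > d + 2) (i j : Fin d) :
    Integrable fun k : EuclideanSpace ℝ (Fin d) =>
      ‖charF d μ k - charF d ν k‖ ^ 2 / (1 + ‖k‖ ^ 2) ^ lam * (k i * k j) := by
  set c : ℝ := (2 * π) ^ (-(d : ℝ) / 2)
  have hF (k : EuclideanSpace ℝ (Fin d)) : ‖charF d μ k - charF d ν k‖ ≤ 2 * c := by
    rw [charF_eq_mul_charFun, charF_eq_mul_charFun, ← mul_sub, norm_mul, Complex.norm_real,
      Real.norm_of_nonneg (by positivity)]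
    exact (mul_le_mul_of_nonneg_left (norm_charFun_sub_le_two μ ν k) (by positivity)).trans_eq
      (mul_comm _ _)
  have hw := integrable_one_add_norm_sq_mul_rpow_neg volume (lam := lam)
    (V := EuclideanSpace ℝ (Fin d)) (by simpa using hlam)
  refine (hw.const_mul ((2 * c) ^ 2)).mono'
    (by simp_rw [charF_eq_mul_charFun]; exact Measurable.aestronglyMeasurable (by fun_prop))
    (ae_of_all _ fun k => ?_)
  have hij : |k i * k j| ≤ 1 + ‖k‖ ^ 2 := by
    have hi : |k i| ≤ ‖k‖ := by simpa using PiLp.norm_apply_le k i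
    have hj : |k j| ≤ ‖k‖ := by simpa using PiLp.norm_apply_le k j
    rw [abs_mul]
    nlinarith [abs_nonneg (k i), abs_nonneg (k j)]
  rw [Real.norm_eq_abs, abs_mul, abs_div, abs_of_nonneg (sq_nonneg ‖charF d μ k - charF d ν k‖),
    abs_of_pos (a := (1 + ‖k‖ ^ 2) ^ lam) (by positivity), div_eq_mul_inv,
    ← Real.rpow_neg (by positivity)]
  calc _ ≤ (2 * c) ^ 2 * (1 + ‖k‖ ^ 2) ^ (-lam) * (1 + ‖k‖ ^ 2) := by
        gcongr
        exact hF k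
    _ = _ := by ring

end Kappa

/-- `∫ ∇²κ d(μ-ν) = -(1/ε) ∫ |F_k(μ-ν)|² k kᵀ /(1+|k|²)^λ dk`, a negative
semidefinite matrix. -/
theorem stmt_7 (d : ℕ) (lam : ℝ) (hlam : 2 * lam > d + 2) (ε : ℝ) (hε : 0 < ε)
    (μ ν : Measure (EuclideanSpace ℝ (Fin d)))
    [IsProbabilityMeasure μ] [IsProbabilityMeasure ν] :
    (Matrix.of fun i j : Fin d =>
        (∫ x, hessEntry d (kappaFn d lam ε μ ν) x i j ∂μ) -
          ∫ x, hessEntry d (kappaFn d lam ε μ ν) x i j ∂ν) =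
      Matrix.of (fun i j : Fin d =>
        -(1 / ε) * ∫ k : EuclideanSpace ℝ (Fin d),
          ‖charF d μ k - charF d ν k‖ ^ 2 * (k i * k j) / (1 + ‖k‖ ^ 2) ^ lam) ∧
    Matrix.PosSemidef (-(Matrix.of fun i j : Fin d =>
        (∫ x, hessEntry d (kappaFn d lam ε μ ν) x i j ∂μ) -
          ∫ x, hessEntry d (kappaFn d lam ε μ ν) x i j ∂ν)) := by
  simp only [integral_hessEntry_kappaFn_sub lam ε μ ν hlam, true_and]
  convert (Matrix.posSemidef_of_integral_mul_mul (fun k => by positivity)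
    (integrable_norm_charF_sub_sq_div_mul lam μ ν hlam)).smul (one_div_nonneg.2 hε.le) using 1
  ext i j
  simp [mul_div_right_comm]
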